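/- Consider the two graded diagrams D₁ with rows (of lengths) (2k, 2k, 2k−2, 2k−2) where the rows of length 2k are one even and one odd and likewise for length 2k−2, and D₂ with four rows of length 2k−1, two even and two odd appropriately (two odd rows of length 2k−1 if 2k−1 ≡ 3 mod 4, matching the indecomposable types). Then D₁ and D₂ have the same associated pair (d₀, d₁), and D₁ and D₂ are comparable in the column-deletion order, with D₂ ≤ D₁. -/

import Mathlib

def rowLabel (b : Bool) (i : ℕ) : Bool := xor b (decide (i % 2 = 1))

def onesCount (l : ℕ) (b : Bool) : ℕ :=
  ((Finset.range l).filter fun i => rowLabel b i = true).card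

def zerosCount (l : ℕ) (b : Bool) : ℕ :=
  ((Finset.range l).filter fun i => rowLabel b i = false).card

def nZeros (D : Multiset (ℕ × Bool)) : ℕ := (D.map fun r => zerosCount r.1 r.2).sum

def nOnes (D : Multiset (ℕ × Bool)) : ℕ := (D.map fun r => onesCount r.1 r.2).sum

def deleteCols (k : ℕ) (D : Multiset (ℕ × Bool)) : Multiset (ℕ × Bool) :=
  (D.filter fun r => k < r.1).map fun r => (r.1 - k, xor r.2 (decide (k % 2 = 1)))

def diagLE (D D' : Multiset (ℕ × Bool)) : Prop :=
  ∀ k : ℕ, 1 ≤ k →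
    nZeros (deleteCols k D) ≤ nZeros (deleteCols k D') ∧
    nOnes (deleteCols k D) ≤ nOnes (deleteCols k D')

def dZero (D : Multiset (ℕ × Bool)) : Multiset ℕ :=
  (D.map fun r => zerosCount r.1 r.2).filter fun a => 0 < a

def dOne (D : Multiset (ℕ × Bool)) : Multiset ℕ :=
  (D.map fun r => onesCount r.1 r.2).filter fun a => 0 < a

/-! Both diagrams are sums of pairs `{(l, false), (l, true)}` of rows of equal length and opposite
parities. Such a pair has `⌈l/2⌉` and `⌊l/2⌋` zeros (and likewise ones) in its two rows, and
deleting `j` columns turns it into a pair of length `l - j`, which has `l - j` zeros and `l - j`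
ones. So `(d₀, d₁)` of both diagrams is `({k, k, k-1, k-1}, {k, k, k-1, k-1})`, and the
column-deletion comparison reduces to `2 (2k-1-j) ≤ (2k-j) + (2k-2-j)` in truncated subtraction. -/

lemma rowLabel_not (b : Bool) (i : ℕ) : rowLabel (!b) i = !rowLabel b i := by
  cases b <;> simp [rowLabel]

lemma zerosCount_eq_onesCount_not (l : ℕ) (b : Bool) : zerosCount l b = onesCount l (!b) := by
  simp [zerosCount, onesCount, rowLabel_not]

lemma onesCount_add_onesCount_not (l : ℕ) (b : Bool) : onesCount l b + onesCount l (!b) = l := by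
  simpa [onesCount, rowLabel_not] using
    Finset.card_filter_add_card_filter_not (s := Finset.range l) (fun i => rowLabel b i = true)

lemma onesCount_false (l : ℕ) : onesCount l false = l / 2 := by
  induction l with
  | zero => rfl
  | succ n ih =>
    rw [onesCount] at ih ⊢
    rw [Finset.range_add_one, Finset.filter_insert]
    by_cases hn : n % 2 = 1
    · rw [if_pos (by simp [rowLabel, hn]), Finset.card_insert_of_notMem (by simp), ih]
      omega
    · rw [if_neg (by simp [rowLabel, hn]), ih]
      omega

lemma onesCount_true (l : ℕ) : onesCount l true = (l + 1) / 2 := by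
  have := onesCount_add_onesCount_not l false
  rw [onesCount_false, Bool.not_false] at this
  omega

lemma zerosCount_false (l : ℕ) : zerosCount l false = (l + 1) / 2 := by
  rw [zerosCount_eq_onesCount_not, Bool.not_false, onesCount_true]

lemma zerosCount_true (l : ℕ) : zerosCount l true = l / 2 := by
  rw [zerosCount_eq_onesCount_not, Bool.not_true, onesCount_false]

lemma Multiset.pair_add_pair_comm {α : Type*} (a b c d : α) :
    ({a, b} + {c, d} : Multiset α) = {a, c} + {b, d} := by
  simp only [Multiset.insert_eq_cons, Multiset.cons_add, Multiset.singleton_add]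
  rw [Multiset.cons_swap b c]

def rowPair (l : ℕ) : Multiset (ℕ × Bool) := {(l, false), (l, true)}

lemma rowPair_eq (l : ℕ) (b : Bool) : rowPair l = {(l, b), (l, !b)} := by
  cases b
  · rfl
  · exact Multiset.pair_comm _ _

lemma map_zerosCount_rowPair (l : ℕ) :
    (rowPair l).map (fun r => zerosCount r.1 r.2) = {(l + 1) / 2, l / 2} := by
  simp [rowPair, zerosCount_false, zerosCount_true]

lemma map_onesCount_rowPair (l : ℕ) :
    (rowPair l).map (fun r => onesCount r.1 r.2) = {l / 2, (l + 1) / 2} := by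
  simp [rowPair, onesCount_false, onesCount_true]

lemma nZeros_rowPair (l : ℕ) : nZeros (rowPair l) = l := by
  rw [nZeros, map_zerosCount_rowPair, Multiset.sum_pair]
  omega

lemma nOnes_rowPair (l : ℕ) : nOnes (rowPair l) = l := by
  rw [nOnes, map_onesCount_rowPair, Multiset.sum_pair]
  omega

lemma nZeros_add (D D' : Multiset (ℕ × Bool)) : nZeros (D + D') = nZeros D + nZeros D' := by
  simp [nZeros]

lemma nOnes_add (D D' : Multiset (ℕ × Bool)) : nOnes (D + D') = nOnes D + nOnes D' := by
  simp [nOnes]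

lemma deleteCols_add (j : ℕ) (D D' : Multiset (ℕ × Bool)) :
    deleteCols j (D + D') = deleteCols j D + deleteCols j D' := by
  simp [deleteCols, Multiset.filter_add]

lemma deleteCols_rowPair (j l : ℕ) :
    deleteCols j (rowPair l) = if j < l then rowPair (l - j) else 0 := by
  split_ifs with h
  · rw [rowPair_eq (l - j) (decide (j % 2 = 1))]
    simp [deleteCols, rowPair, Multiset.filter_singleton, h]
  · simp [deleteCols, rowPair, Multiset.filter_singleton, h]

lemma nZeros_deleteCols_rowPair (j l : ℕ) : nZeros (deleteCols j (rowPair l)) = l - j := by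
  rw [deleteCols_rowPair]
  split_ifs
  · exact nZeros_rowPair _
  · rw [nZeros, Multiset.map_zero, Multiset.sum_zero]
    omega

lemma nOnes_deleteCols_rowPair (j l : ℕ) : nOnes (deleteCols j (rowPair l)) = l - j := by
  rw [deleteCols_rowPair]
  split_ifs
  · exact nOnes_rowPair _
  · rw [nOnes, Multiset.map_zero, Multiset.sum_zero]
    omega

theorem stmt15_general (k : ℕ)
    (D₁ D₂ : Multiset (ℕ × Bool))
    (hD₁ : D₁ = {(2 * k, false), (2 * k, true), (2 * k - 2, false), (2 * k - 2, true)})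
    (hD₂ : D₂ = {(2 * k - 1, false), (2 * k - 1, false), (2 * k - 1, true), (2 * k - 1, true)}) :
    dZero D₁ = dZero D₂ ∧ dOne D₁ = dOne D₂ ∧ diagLE D₂ D₁ := by
  have hD₁' : D₁ = rowPair (2 * k) + rowPair (2 * k - 2) := hD₁
  have hD₂' : D₂ = rowPair (2 * k - 1) + rowPair (2 * k - 1) :=
    hD₂.trans (Multiset.pair_add_pair_comm _ _ _ _)
  have halves : (2 * k + 1) / 2 = k ∧ 2 * k / 2 = k ∧ (2 * k - 2 + 1) / 2 = k - 1 ∧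
      (2 * k - 2) / 2 = k - 1 ∧ (2 * k - 1 + 1) / 2 = k ∧ (2 * k - 1) / 2 = k - 1 := by
    omega
  refine ⟨?_, ?_, fun j _ => ?_⟩
  · simp only [dZero, hD₁', hD₂', Multiset.map_add, map_zerosCount_rowPair, halves,
      Multiset.pair_add_pair_comm k (k - 1)]
  · simp only [dOne, hD₁', hD₂', Multiset.map_add, map_onesCount_rowPair, halves]
    rw [Multiset.pair_add_pair_comm (k - 1) k, add_comm]
  · simp only [hD₁', hD₂', deleteCols_add, nZeros_add, nOnes_add, nZeros_deleteCols_rowPair,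
      nOnes_deleteCols_rowPair]
    omega

/-- for `k ≥ 1`, the graded diagram `D₁` with an even and an odd row of
length `2k` plus an even and an odd row of length `2k-2`, and the graded diagram `D₂`
with two even and two odd rows of length `2k-1`, have the same associated pair
`(d₀, d₁)`, and they are comparable in the column-deletion order with `D₂ ≤ D₁`. -/
theorem stmt15 (k : ℕ) (hk : 1 ≤ k)
    (D₁ D₂ : Multiset (ℕ × Bool))
    (hD₁ : D₁ = {(2 * k, false), (2 * k, true), (2 * k - 2, false), (2 * k - 2, true)})
    (hD₂ : D₂ = {(2 * k - 1, false), (2 * k - 1, false), (2 * k - 1, true), (2 * k - 1, true)}) :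
    dZero D₁ = dZero D₂ ∧ dOne D₁ = dOne D₂ ∧ diagLE D₂ D₁ :=
  stmt15_general k D₁ D₂ hD₁ hD₂
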